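/- Let 0 < ε < π. Then the first derivative of the infinite-order scaled kernel with range ε is expressed in terms of two translated copies of the infinite-order scaled kernel with range ε/2: for every real θ, (d/dθ) K̄_ε(θ) = (1/ε) · ( K̄_{ε/2}(θ + ε/2) − K̄_{ε/2}(θ − ε/2) ). -/

import Mathlib

/-- The sinc function: `sinc x = sin x / x` for `x ≠ 0` and `sinc 0 = 1`. -/
noncomputable def sinc (x : ℝ) : ℝ := if x = 0 then 1 else Real.sin x / x

/-- The Fourier coefficient `c_k(ε) = ∏_{n=1}^∞ sinc(kε/2^n)` of the
infinite-order scaled kernel. -/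
noncomputable def infKernelCoeff (ε : ℝ) (k : ℕ) : ℝ :=
  ∏' n : ℕ, sinc ((k : ℝ) * ε / 2 ^ (n + 1))

/-- The infinite-order scaled kernel with range `ε`:
`K̄_ε(θ) = 1/(2π) + (1/π) Σ_{k=1}^∞ c_k(ε) cos(kθ)`. -/
noncomputable def infKernel (ε : ℝ) (θ : ℝ) : ℝ :=
  1 / (2 * Real.pi) +
    (1 / Real.pi) * ∑' k : ℕ, infKernelCoeff ε (k + 1) * Real.cos ((k + 1 : ℝ) * θ)

/-!
Peeling off the first factor of the sinc product gives `c_k(ε) = sinc(kε/2) · c_k(ε/2)`, while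
`cos(k(θ + ε/2)) - cos(k(θ - ε/2)) = -2 sin(kθ) sin(kε/2) = -kε · sinc(kε/2) · sin(kθ)`.
Hence the right-hand side is, term by term, the derivative `-k c_k(ε) sin(kθ)` of
`c_k(ε) cos(kθ)`.
Termwise differentiation is legitimate because the first three factors of the product give
`|c_k(ε)| ≤ 64 / (kε)³`, the remaining ones having absolute value at most `1`.
-/

open Filter Finset

lemma sinc_eq_real_sinc : sinc = Real.sinc := rfl

lemma abs_sinc_le_inv_abs {x : ℝ} (hx : x ≠ 0) : |sinc x| ≤ |x|⁻¹ := by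
  rw [sinc_eq_real_sinc, Real.sinc_of_ne_zero hx, abs_div, div_eq_mul_inv]
  exact mul_le_of_le_one_left (by positivity) (Real.abs_sin_le_one x)

lemma abs_sinc_sub_one_le (x : ℝ) : |sinc x - 1| ≤ x ^ 2 / 6 := by
  wlog hx : 0 < x generalizing x
  · rcases (not_lt.1 hx).eq_or_lt with rfl | hneg
    · simp [sinc]
    simpa [sinc_eq_real_sinc] using this (-x) (neg_pos.2 hneg)
  rw [sinc_eq_real_sinc, Real.sinc_of_ne_zero hx.ne', abs_sub_comm,
    abs_of_nonneg (sub_nonneg.2 ((div_le_one hx).2 (Real.sin_le hx.le))),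
    sub_le_iff_le_add, ← sub_le_iff_le_add', le_div_iff₀ hx]
  nlinarith [Real.sin_gt_sub_cube hx]

lemma multipliable_sinc_div_two_pow (c : ℝ) :
    Multipliable fun n : ℕ => sinc (c / 2 ^ (n + 1)) := by
  have hsum : Summable fun n : ℕ => sinc (c / 2 ^ (n + 1)) - 1 := by
    refine Summable.of_norm_bounded ((summable_geometric_of_lt_one (by norm_num)
      (by norm_num : (1 / 4 : ℝ) < 1)).mul_left (c ^ 2 / 24)) fun n => ?_
    refine (abs_sinc_sub_one_le _).trans_eq ?_
    have h4 : (4 : ℝ) ^ n = (2 ^ n) ^ 2 := by rw [← pow_mul, mul_comm, pow_mul]; norm_num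
    rw [one_div_pow, h4]
    field_simp
    ring
  simpa using Real.multipliable_one_add_of_summable hsum

lemma abs_tprod_le_prod_abs {ι : Type*} {f : ι → ℝ} (hf : Multipliable f)
    (h : ∀ i, |f i| ≤ 1) (s : Finset ι) : |∏' i, f i| ≤ ∏ i ∈ s, |f i| := by
  classical
  refine le_of_tendsto hf.hasProd.abs (eventually_atTop.2 ⟨s, fun t hst => ?_⟩)
  rw [← prod_sdiff hst]
  exact mul_le_of_le_one_left (prod_nonneg fun i _ => abs_nonneg _)
    (prod_le_one (fun i _ => abs_nonneg _) fun i _ => h i)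

lemma abs_tprod_sinc_div_two_pow_le {c : ℝ} (hc : c ≠ 0) :
    |∏' n : ℕ, sinc (c / 2 ^ (n + 1))| ≤ 64 / |c| ^ 3 := by
  refine ((abs_tprod_le_prod_abs (multipliable_sinc_div_two_pow c)
    (fun n => Real.abs_sinc_le_one _) (range 3)).trans
      (prod_le_prod (fun _ _ => abs_nonneg _) fun n _ =>
        abs_sinc_le_inv_abs (by positivity))).trans_eq ?_
  simp only [prod_range_succ, prod_range_zero, abs_div, abs_pow, abs_two]
  field_simp
  norm_num

lemma summable_mul_cos {a : ℕ → ℝ} (ha : Summable fun k => |a k|) (θ : ℝ) :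
    Summable fun k : ℕ => a k * Real.cos ((k + 1 : ℝ) * θ) :=
  ha.of_norm_bounded fun k => by
    rw [Real.norm_eq_abs, abs_mul]
    exact mul_le_of_le_one_right (abs_nonneg _) (Real.abs_cos_le_one _)

lemma summable_abs_of_summable_abs_mul_succ {a : ℕ → ℝ}
    (ha : Summable fun k : ℕ => |a k| * (k + 1)) : Summable fun k => |a k| :=
  ha.of_nonneg_of_le (fun k => abs_nonneg _) fun k =>
    le_mul_of_one_le_right (abs_nonneg _) (by simp)

lemma hasDerivAt_tsum_mul_cos {a : ℕ → ℝ} (ha : Summable fun k : ℕ => |a k| * (k + 1))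
    (θ : ℝ) :
    HasDerivAt (fun θ => ∑' k : ℕ, a k * Real.cos ((k + 1 : ℝ) * θ))
      (∑' k : ℕ, -(a k * (k + 1) * Real.sin ((k + 1 : ℝ) * θ))) θ := by
  have hterm (k : ℕ) (y : ℝ) : HasDerivAt (fun y => a k * Real.cos ((k + 1 : ℝ) * y))
      (-(a k * (k + 1) * Real.sin ((k + 1 : ℝ) * y))) y :=
    (((hasDerivAt_id y).const_mul ((k : ℝ) + 1)).cos.const_mul (a k)).congr_deriv
      (by simp; ring)
  have hbound (k : ℕ) (y : ℝ) :
      ‖-(a k * (k + 1) * Real.sin ((k + 1 : ℝ) * y))‖ ≤ |a k| * (k + 1) := by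
    rw [norm_neg, Real.norm_eq_abs, abs_mul, abs_mul,
      abs_of_pos (by positivity : (0 : ℝ) < k + 1)]
    exact mul_le_of_le_one_right (by positivity) (Real.abs_sin_le_one _)
  exact hasDerivAt_tsum ha hterm hbound
    (summable_mul_cos (summable_abs_of_summable_abs_mul_succ ha) θ) θ

lemma infKernelCoeff_eq_sinc_mul (ε : ℝ) (k : ℕ) :
    infKernelCoeff ε k = sinc (k * ε / 2) * infKernelCoeff (ε / 2) k := by
  have htail : Multipliable fun n : ℕ => sinc (k * ε / 2 ^ (n + 1 + 1)) := by
    convert multipliable_sinc_div_two_pow (k * ε / 2) using 3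
    rw [div_div, ← pow_succ']
  rw [infKernelCoeff, tprod_eq_zero_mul' (f := fun n => sinc (k * ε / 2 ^ (n + 1))) htail,
    zero_add, pow_one, infKernelCoeff]
  exact congrArg _ (tprod_congr fun n => by congr 1; ring)

lemma abs_infKernelCoeff_le {ε : ℝ} (hε : 0 < ε) (k : ℕ) :
    |infKernelCoeff ε (k + 1)| ≤ 64 / ((k + 1) * ε) ^ 3 := by
  have hc : (0 : ℝ) < (k + 1) * ε := by positivity
  simpa [infKernelCoeff, abs_of_pos hc] using abs_tprod_sinc_div_two_pow_le hc.ne'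

lemma summable_abs_infKernelCoeff_mul {ε : ℝ} (hε : 0 < ε) :
    Summable fun k : ℕ => |infKernelCoeff ε (k + 1)| * (k + 1) := by
  have hp : Summable fun k : ℕ => 1 / ((k : ℝ) + 1) ^ 2 := by
    simpa using (summable_nat_add_iff 1).2 (Real.summable_one_div_nat_pow.2 one_lt_two)
  refine (hp.mul_left (64 / ε ^ 3)).of_nonneg_of_le (fun k => by positivity) fun k => ?_
  calc |infKernelCoeff ε (k + 1)| * (k + 1) ≤ 64 / ((k + 1) * ε) ^ 3 * (k + 1) := by
        gcongr
        exact abs_infKernelCoeff_le hε k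
    _ = 64 / ε ^ 3 * (1 / ((k : ℝ) + 1) ^ 2) := by
        field_simp

lemma infKernelCoeff_mul_cos_sub_cos {ε : ℝ} (hε : ε ≠ 0) (k : ℕ) (θ : ℝ) :
    1 / ε * (infKernelCoeff (ε / 2) (k + 1) * Real.cos ((k + 1 : ℝ) * (θ + ε / 2)) -
        infKernelCoeff (ε / 2) (k + 1) * Real.cos ((k + 1 : ℝ) * (θ - ε / 2))) =
      -(infKernelCoeff ε (k + 1) * (k + 1) * Real.sin ((k + 1 : ℝ) * θ)) := by
  have hne : ((k : ℝ) + 1) * ε / 2 ≠ 0 := by positivity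
  rw [infKernelCoeff_eq_sinc_mul ε (k + 1), Nat.cast_succ, sinc_eq_real_sinc,
    Real.sinc_of_ne_zero hne,
    show ((k : ℝ) + 1) * (θ + ε / 2) = (k + 1) * θ + (k + 1) * ε / 2 by ring,
    show ((k : ℝ) + 1) * (θ - ε / 2) = (k + 1) * θ - (k + 1) * ε / 2 by ring,
    Real.cos_add, Real.cos_sub]
  field_simp
  ring

lemma hasDerivAt_infKernel {ε : ℝ} (hε : 0 < ε) (θ : ℝ) :
    HasDerivAt (infKernel ε) (1 / Real.pi *
      ∑' k : ℕ, -(infKernelCoeff ε (k + 1) * (k + 1) * Real.sin ((k + 1 : ℝ) * θ))) θ :=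
  ((hasDerivAt_tsum_mul_cos (summable_abs_infKernelCoeff_mul hε) θ).const_mul _).const_add _

theorem stmt_14_general (ε : ℝ) (hε : 0 < ε) (θ : ℝ) :
    HasDerivAt (infKernel ε)
      ((1 / ε) * (infKernel (ε / 2) (θ + ε / 2) - infKernel (ε / 2) (θ - ε / 2))) θ := by
  have hsummable (y : ℝ) := summable_mul_cos
    (summable_abs_of_summable_abs_mul_succ (summable_abs_infKernelCoeff_mul (half_pos hε))) y
  convert hasDerivAt_infKernel hε θ using 1
  simp only [infKernel, ← tsum_congr (infKernelCoeff_mul_cos_sub_cos hε.ne' · θ),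
    tsum_mul_left, (hsummable _).tsum_sub (hsummable _)]
  ring

/-- For `0 < ε < π`, the first derivative of the infinite-order scaled
kernel with range `ε` is given by two translated copies of the kernel with range `ε/2`:
`(d/dθ) K̄_ε(θ) = (1/ε)·(K̄_{ε/2}(θ + ε/2) − K̄_{ε/2}(θ − ε/2))` for every real `θ`. -/
theorem stmt_14 (ε : ℝ) (hε : 0 < ε) (hεπ : ε < Real.pi) (θ : ℝ) :
    HasDerivAt (infKernel ε)
      ((1 / ε) * (infKernel (ε / 2) (θ + ε / 2) - infKernel (ε / 2) (θ - ε / 2))) θ :=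
  stmt_14_general ε hε θ
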